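/- Consider a finite-horizon multi-objective MDP with finite nonempty state type S, finite nonempty action type A, transition probabilities p, rewards R : Fin L → S → A → ℝ, and horizon T, with V*, Q, and restricted action sets A_i given by the FLMDP backward recursion. Let π be a deterministic Markov policy, t < T, s a state, and 1 ≤ i < L. Suppose V^π_j(t+1, s') = V*_j(t+1, s') for every state s' and every j ≤ i+1, and suppose V^π_j(t, s) = V*_j(t, s) for every j ≤ i. Then π_t(s) ∈ A_i(t,s) and V^π_{i+1}(t,s) ≤ V*_{i+1}(t,s). -/

import Mathlib

open Classical

/-- Value functions of a deterministic Markov policy `pol` in a finite-horizon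
multi-objective MDP, by backward recursion: `V^π_i(T,s) = 0` and, for `t < T`,
`V^π_i(t,s) = R_i(s, π_t(s)) + ∑_{s'} p s (π_t(s)) s' · V^π_i(t+1,s')`. -/
noncomputable def Vpol {S A : Type*} [Fintype S] (p : S → A → S → ℝ) {L : ℕ}
    (R : Fin L → S → A → ℝ) (T : ℕ) (pol : ℕ → S → A) : ℕ → Fin L → S → ℝ
  | t => fun i s =>
    if h : t < T then
      R i s (pol t s) + ∑ s', p s (pol t s) s' * Vpol p R T pol (t + 1) i s'
    else 0
  termination_by t => T - t
  decreasing_by omega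

/-- The FLMDP optimal value functions `V*`, by backward recursion: `V*_i(T,s) = 0`
and, for `t < T`, `V*_i(t,s) = max_{a ∈ A_{i-1}(t,s)} Q_i(t,s,a)` where
`Q_i(t,s,a) = R_i(s,a) + ∑_{s'} p s a s' · V*_i(t+1,s')`, `A_0(t,s) = A`, and
`A_i(t,s)` is the set of maximizers of `Q_i(t,s,·)` over `A_{i-1}(t,s)`
(indices written 0-based via `Fin L`). -/
noncomputable def Vstar {S A : Type*} [Fintype S] [Fintype A] (p : S → A → S → ℝ) {L : ℕ}
    (R : Fin L → S → A → ℝ) (T : ℕ) : ℕ → Fin L → S → ℝ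
  | t => fun i s =>
    if h : t < T then
      sSup ((fun a => R i s a + ∑ s', p s a s' * Vstar p R T (t + 1) i s') ''
        ↑(Nat.rec (motive := fun _ => S → Finset A) (fun _ => (Finset.univ : Finset A))
            (fun j prev s => (prev s).filter fun a =>
              if hj : j < L then
                ∀ a' ∈ prev s,
                  (R ⟨j, hj⟩ s a' + ∑ s', p s a' s' * Vstar p R T (t + 1) ⟨j, hj⟩ s') ≤
                    (R ⟨j, hj⟩ s a + ∑ s', p s a s' * Vstar p R T (t + 1) ⟨j, hj⟩ s')
              else True)
            (i : ℕ) s))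
    else 0
  termination_by t => T - t
  decreasing_by all_goals omega

/-- The FLMDP state-action values `Q_i(t,s,a) = R_i(s,a) + ∑_{s'} p s a s' · V*_i(t+1,s')`
(0-based `i`). -/
noncomputable def Qstar {S A : Type*} [Fintype S] [Fintype A] (p : S → A → S → ℝ) {L : ℕ}
    (R : Fin L → S → A → ℝ) (T : ℕ) (t : ℕ) (i : Fin L) (s : S) (a : A) : ℝ :=
  R i s a + ∑ s', p s a s' * Vstar p R T (t + 1) i s'

/-- The FLMDP restricted action sets: `A_0(t,s) = A` and
`A_{j+1}(t,s) = {a ∈ A_j(t,s) : Q_{j+1}(t,s,a) maximal over A_j(t,s)}`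
(the `Q` index written 0-based). -/
noncomputable def Aset {S A : Type*} [Fintype S] [Fintype A] (p : S → A → S → ℝ) {L : ℕ}
    (R : Fin L → S → A → ℝ) (T : ℕ) (t : ℕ) : ℕ → S → Finset A
  | 0, _ => Finset.univ
  | j + 1, s =>
    if hj : j < L then
      (Aset p R T t j s).filter fun a =>
        ∀ a' ∈ Aset p R T t j s, Qstar p R T t ⟨j, hj⟩ s a' ≤ Qstar p R T t ⟨j, hj⟩ s a
    else Aset p R T t j s

/-! Once `V^π(t+1, ·)` agrees with `V*(t+1, ·)` for objective `j`, the policy's value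
`V^π_j(t,s)` is exactly `Q_j(t,s,π_t(s))`. Equality with `V*_j(t,s)` for all `j < i` thus
says that `π_t(s)` attains the maximum in each of the first `i` filtering rounds, so it lies
in `A_i(t,s)`, and there `Q_i(t,s,·)` is bounded by its supremum `V*_i(t,s)`. -/

section
variable {S A : Type*} [Fintype S] (p : S → A → S → ℝ) {L : ℕ} (R : Fin L → S → A → ℝ) (T : ℕ)

lemma Vpol_of_lt (pol : ℕ → S → A) {t : ℕ} (ht : t < T) (i : Fin L) (s : S) :
    Vpol p R T pol t i s =
      R i s (pol t s) + ∑ s', p s (pol t s) s' * Vpol p R T pol (t + 1) i s' := by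
  rw [Vpol]
  simp [ht]

variable [Fintype A]

/-- The `Nat.rec` inside the definition of `Vstar` computes `Aset`. -/
lemma Aset_eq_rec (t : ℕ) : ∀ j : ℕ,
    (Nat.rec (motive := fun _ => S → Finset A) (fun _ => (Finset.univ : Finset A))
      (fun j prev s => (prev s).filter fun a =>
        if hj : j < L then
          ∀ a' ∈ prev s,
            (R ⟨j, hj⟩ s a' + ∑ s', p s a' s' * Vstar p R T (t + 1) ⟨j, hj⟩ s') ≤
              (R ⟨j, hj⟩ s a + ∑ s', p s a s' * Vstar p R T (t + 1) ⟨j, hj⟩ s')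
        else True) j) = fun s => Aset p R T t j s
  | 0 => rfl
  | j + 1 => by
      funext s
      show Finset.filter _ _ = _
      rw [Aset_eq_rec t j, Aset]
      by_cases hj : j < L
      · simp only [hj, dif_pos, Qstar]
        ext a
        rw [Finset.mem_filter]
        exact Iff.symm Finset.mem_filter
      · simp [hj]

lemma Vstar_of_lt {t : ℕ} (ht : t < T) (i : Fin L) (s : S) :
    Vstar p R T t i s = sSup (Qstar p R T t i s '' ↑(Aset p R T t i s)) := by
  rw [Vstar]
  simp only [ht, dif_pos, Aset_eq_rec p R T t i]
  rfl

lemma Qstar_le_Vstar {t : ℕ} (ht : t < T) (i : Fin L) (s : S) {a : A}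
    (ha : a ∈ Aset p R T t i s) : Qstar p R T t i s a ≤ Vstar p R T t i s := by
  rw [Vstar_of_lt p R T ht]
  exact le_csSup ((Aset p R T t i s).finite_toSet.image _).bddAbove ⟨a, ha, rfl⟩

lemma mem_Aset_of_Qstar_eq_Vstar {t : ℕ} (ht : t < T) (s : S) {a : A} :
    ∀ i : ℕ, (∀ k : Fin L, (k : ℕ) < i → Qstar p R T t k s a = Vstar p R T t k s) →
      a ∈ Aset p R T t i s
  | 0, _ => Finset.mem_univ a
  | j + 1, ha => by
      have ha_prev : a ∈ Aset p R T t j s :=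
        mem_Aset_of_Qstar_eq_Vstar ht s j fun k hk => ha k (by omega)
      rw [Aset]
      split_ifs with hj
      · refine Finset.mem_filter.2 ⟨ha_prev, fun a' ha' => ?_⟩
        rw [ha ⟨j, hj⟩ (by simp)]
        exact Qstar_le_Vstar p R T ht ⟨j, hj⟩ s ha'
      · exact ha_prev

lemma Qstar_pol_eq_Vpol (pol : ℕ → S → A) {t : ℕ} (ht : t < T) (i : Fin L) (s : S)
    (hnext : ∀ s', Vpol p R T pol (t + 1) i s' = Vstar p R T (t + 1) i s') :
    Qstar p R T t i s (pol t s) = Vpol p R T pol t i s := by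
  simp only [Vpol_of_lt p R T pol ht, Qstar, hnext]

end

theorem inductive_step_membership_and_le_general
    {S A : Type*} [Fintype S] [Fintype A]
    (p : S → A → S → ℝ)
    {L : ℕ} (R : Fin L → S → A → ℝ) (T : ℕ)
    (pol : ℕ → S → A) (t : ℕ) (ht : t < T) (s : S)
    (i : ℕ) (hiL : i < L)
    (hnext : ∀ j : Fin L, (j : ℕ) ≤ i → ∀ s',
        Vpol p R T pol (t + 1) j s' = Vstar p R T (t + 1) j s')
    (hcur : ∀ j : Fin L, (j : ℕ) < i → Vpol p R T pol t j s = Vstar p R T t j s) :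
    pol t s ∈ Aset p R T t i s ∧
      Vpol p R T pol t ⟨i, hiL⟩ s ≤ Vstar p R T t ⟨i, hiL⟩ s := by
  have hQ : ∀ j : Fin L, (j : ℕ) ≤ i → Qstar p R T t j s (pol t s) = Vpol p R T pol t j s :=
    fun j hj => Qstar_pol_eq_Vpol p R T pol ht j s (hnext j hj)
  have hmem : pol t s ∈ Aset p R T t i s :=
    mem_Aset_of_Qstar_eq_Vstar p R T ht s i fun k hk => (hQ k hk.le).trans (hcur k hk)
  refine ⟨hmem, ?_⟩
  rw [← hQ ⟨i, hiL⟩ le_rfl]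
  exact Qstar_le_Vstar p R T ht ⟨i, hiL⟩ s hmem

/-- indices of the paper are 1-based; here value-function indices are the
0-based `Fin L`, so paper objective `j` is `Fin`-index `j - 1`: if
`V^π_j(t+1,s') = V*_j(t+1,s')` for all states `s'` and all paper indices `j ≤ i+1`
(i.e. `Fin`-indices `≤ i`), and `V^π_j(t,s) = V*_j(t,s)` for all paper indices `j ≤ i`
(i.e. `Fin`-indices `< i`), then `π_t(s) ∈ A_i(t,s)` and
`V^π_{i+1}(t,s) ≤ V*_{i+1}(t,s)` (paper index `i+1` is `Fin`-index `i`). -/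
theorem inductive_step_membership_and_le
    {S A : Type*} [Fintype S] [Fintype A] [Nonempty S] [Nonempty A]
    (p : S → A → S → ℝ)
    (hp0 : ∀ s a s', 0 ≤ p s a s') (hp1 : ∀ s a, ∑ s', p s a s' = 1)
    {L : ℕ} (R : Fin L → S → A → ℝ) (T : ℕ)
    (pol : ℕ → S → A) (t : ℕ) (ht : t < T) (s : S)
    (i : ℕ) (hi1 : 1 ≤ i) (hiL : i < L)
    (hnext : ∀ j : Fin L, (j : ℕ) ≤ i → ∀ s',
        Vpol p R T pol (t + 1) j s' = Vstar p R T (t + 1) j s')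
    (hcur : ∀ j : Fin L, (j : ℕ) < i → Vpol p R T pol t j s = Vstar p R T t j s) :
    pol t s ∈ Aset p R T t i s ∧
      Vpol p R T pol t ⟨i, hiL⟩ s ≤ Vstar p R T t ⟨i, hiL⟩ s :=
  inductive_step_membership_and_le_general p R T pol t ht s i hiL hnext hcur
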